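/- Fix L_C > 0, β ∈ ℝ, and 0 < α < α′. Suppose A is a linear map from 𝒞^{α,β} to complex-valued functions on Γ_ℂ, and M > 0 is a constant such that for every f ∈ 𝒞^{α,β}: (i) Af ∈ 𝒞^{α′,β} with ‖Af‖_{α′,β} ≤ M‖f‖_{α,β}; and (ii) |Af(x) − Af(y)| ≤ M‖f‖_{α,β}(e^{−β|Im x|} + e^{−β|Im y|})|x − y| for all x, y ∈ Γ_ℂ. Then A is compact as an operator from 𝒞^{α,β} to itself: every sequence (f_n) in 𝒞^{α,β} with ‖f_n‖_{α,β} ≤ 1 has a subsequence (f_{n_k}) for which (Af_{n_k}) is Cauchy in the norm ‖·‖_{α,β}. -/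

import Mathlib

open MeasureTheory Set

noncomputable section

noncomputable section

/-- The region `Γ_L = {z : Re z < -L, Im z ≤ 0}`. -/
def GammaL (L : ℝ) : Set ℂ := {z | z.re < -L ∧ z.im ≤ 0}

/-- The region `Γ_M = {z : |Re z| ≤ L, Im z = 0}`. -/
def GammaM (L : ℝ) : Set ℂ := {z | |z.re| ≤ L ∧ z.im = 0}

/-- The region `Γ_R = {z : Re z > L, Im z ≥ 0}`. -/
def GammaR (L : ℝ) : Set ℂ := {z | L < z.re ∧ 0 ≤ z.im}

/-- The contour region `Γ_ℂ = Γ_L ∪ Γ_M ∪ Γ_R`. -/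
def GammaC (L : ℝ) : Set ℂ := GammaL L ∪ GammaM L ∪ GammaR L

/-- The weight `e^{β|Im x|} (1+|x|)^α`. -/
def cweight (α β : ℝ) (x : ℂ) : ℝ :=
  Real.exp (β * |x.im|) * (1 + ‖x‖) ^ α

/-- The norm `‖f‖_{α,β} = sup_{x ∈ Γ_ℂ} e^{β|Im x|}(1+|x|)^α |f x|`. -/
def cnorm (L α β : ℝ) (f : ℂ → ℂ) : ℝ :=
  sSup ((fun x => cweight α β x * ‖f x‖) '' GammaC L)

/-- Membership in the space `𝒞^{α,β}`: continuous on `Γ_ℂ`, analytic on the interiors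
of `Γ_L` and `Γ_R`, and with finite norm `‖f‖_{α,β}` (the weighted values are bounded). -/
def MemC (L α β : ℝ) (f : ℂ → ℂ) : Prop :=
  ContinuousOn f (GammaC L) ∧
  AnalyticOnNhd ℂ f (interior (GammaL L)) ∧
  AnalyticOnNhd ℂ f (interior (GammaR L)) ∧
  BddAbove ((fun x => cweight α β x * ‖f x‖) '' GammaC L)

lemma cweight_pos (α β : ℝ) (x : ℂ) : 0 < cweight α β x := by
  have h : (0:ℝ) < 1 + ‖x‖ := by positivity
  exact mul_pos (Real.exp_pos _) (Real.rpow_pos_of_pos h _)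

lemma le_cnorm_of_mem {L α β : ℝ} {f : ℂ → ℂ}
    (hb : BddAbove ((fun x => cweight α β x * ‖f x‖) '' GammaC L))
    {x : ℂ} (hx : x ∈ GammaC L) :
    cweight α β x * ‖f x‖ ≤ cnorm L α β f :=
  le_csSup hb ⟨x, hx, rfl⟩

lemma aux_div (c e : ℝ) (hc : 0 ≤ c) (he : 0 ≤ e) :
    c * (e / (4 * (c + 1))) ≤ e / 4 := by
  have hc1 : (0:ℝ) < 4 * (c + 1) := by linarith
  rw [mul_div_assoc', div_le_div_iff₀ hc1 (by norm_num : (0:ℝ) < 4)]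
  nlinarith

lemma cnorm_le_of_forall {L α β a : ℝ} {f : ℂ → ℂ} (ha : 0 ≤ a)
    (h : ∀ x ∈ GammaC L, cweight α β x * ‖f x‖ ≤ a) :
    cnorm L α β f ≤ a :=
  Real.sSup_le (by rintro v ⟨x, hx, rfl⟩; exact h x hx) ha

/-- A linear operator `A` on `𝒞^{α,β}` that improves the decay rate
from `α` to `α' > α` and satisfies the weighted Lipschitz estimate (ii) is compact from
`𝒞^{α,β}` to itself: every norm-bounded sequence has a subsequence whose image under
`A` is Cauchy in `‖·‖_{α,β}`. -/
theorem statement_2 (L : ℝ) (hL : 0 < L) (β α α' : ℝ) (hα : 0 < α) (hαα' : α < α')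
    (A : (ℂ → ℂ) → ℂ → ℂ) (M : ℝ) (hM : 0 < M)
    (hlin : ∀ c : ℂ, ∀ f g : ℂ → ℂ, MemC L α β f → MemC L α β g →
      ∀ x ∈ GammaC L, A (fun y => c * f y + g y) x = c * A f x + A g x)
    (hbd : ∀ f : ℂ → ℂ, MemC L α β f → MemC L α' β (A f) ∧
      cnorm L α' β (A f) ≤ M * cnorm L α β f)
    (hlip : ∀ f : ℂ → ℂ, MemC L α β f → ∀ x ∈ GammaC L, ∀ y ∈ GammaC L,
      ‖A f x - A f y‖ ≤ M * cnorm L α β f *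
        (Real.exp (-β * |x.im|) + Real.exp (-β * |y.im|)) * ‖x - y‖) :
    ∀ f : ℕ → ℂ → ℂ, (∀ n, MemC L α β (f n) ∧ cnorm L α β (f n) ≤ 1) →
      ∃ φ : ℕ → ℕ, StrictMono φ ∧
        ∀ ε > 0, ∃ N : ℕ, ∀ m ≥ N, ∀ n ≥ N,
          cnorm L α β (fun x => A (f (φ m)) x - A (f (φ n)) x) < ε := by
  classical
  intro f hf
  -- `0 ∈ Γ_ℂ`
  have h0mem : (0:ℂ) ∈ GammaC L := by
    have : (0:ℂ) ∈ GammaM L := by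
      constructor
      · simpa using hL.le
      · simp
    exact Or.inl (Or.inr this)
  -- countable dense subset of `Γ_ℂ`
  obtain ⟨S, hScount, hSdense⟩ := TopologicalSpace.exists_countable_dense (GammaC L)
  have hDcount : (insert (0:ℂ) (Subtype.val '' S)).Countable :=
    ((hScount.image _).insert 0)
  obtain ⟨u, hu⟩ := hDcount.exists_eq_range ⟨0, mem_insert _ _⟩
  have hum : ∀ n, u n ∈ GammaC L := by
    intro n
    have hmem : u n ∈ insert (0:ℂ) (Subtype.val '' S) := by
      rw [hu]; exact mem_range_self n
    rcases hmem with h | ⟨w, _, hw⟩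
    · rw [h]; exact h0mem
    · rw [← hw]; exact w.2
  have hDdense : ∀ x ∈ GammaC L, ∀ r > 0, ∃ n, dist x (u n) < r := by
    intro x hx r hr
    have hcl : (⟨x, hx⟩ : GammaC L) ∈ closure S := hSdense _
    obtain ⟨b, hbS, hbd'⟩ := Metric.mem_closure_iff.mp hcl r hr
    have hbD : (b : ℂ) ∈ insert (0:ℂ) (Subtype.val '' S) :=
      mem_insert_of_mem _ ⟨b, hbS, rfl⟩
    rw [hu] at hbD
    obtain ⟨n, hn⟩ := hbD
    refine ⟨n, ?_⟩
    rw [hn]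
    rwa [Subtype.dist_eq] at hbd'
  -- uniform bounds on `A (f k)`
  have hAle : ∀ k, cnorm L α' β (A (f k)) ≤ M := by
    intro k
    refine le_trans (hbd (f k) (hf k).1).2 ?_
    calc M * cnorm L α β (f k) ≤ M * 1 :=
          mul_le_mul_of_nonneg_left (hf k).2 hM.le
      _ = M := mul_one M
  have hptbd : ∀ k, ∀ x ∈ GammaC L, cweight α' β x * ‖A (f k) x‖ ≤ M :=
    fun k x hx => le_trans (le_cnorm_of_mem (hbd (f k) (hf k).1).1.2.2.2 hx) (hAle k)
  -- extraction of a pointwise convergent subsequence via Tychonoff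
  have hgmem : ∀ k, (fun n => A (f k) (u n)) ∈
      Set.univ.pi (fun n => Metric.closedBall (0:ℂ) (M / cweight α' β (u n))) := by
    intro k n _
    simp only [Metric.mem_closedBall, Complex.dist_eq, sub_zero]
    rw [le_div_iff₀ (cweight_pos _ _ _), mul_comm]
    exact hptbd k (u n) (hum n)
  have hcMp : IsCompact (Set.univ.pi fun n => Metric.closedBall (0:ℂ) (M / cweight α' β (u n))) :=
    isCompact_univ_pi fun n => isCompact_closedBall _ _
  obtain ⟨a, -, φ, hφ, hconv⟩ :=
    hcMp.isSeqCompact (x := fun k => (fun n => A (f k) (u n))) hgmem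
  have hcauchy : ∀ i, CauchySeq (fun k => A (f (φ k)) (u i)) := by
    intro i
    exact (tendsto_pi_nhds.mp hconv i).cauchySeq
  refine ⟨φ, hφ, ?_⟩
  intro ε hε
  -- choose the truncation radius R
  have hexp : (0:ℝ) < α' - α := by linarith
  have hpos : (0:ℝ) < ε / (4 * M) := by positivity
  obtain ⟨R₀, hR₀⟩ := Filter.eventually_atTop.mp
    ((tendsto_rpow_neg_atTop hexp).eventually_lt_const hpos)
  set R : ℝ := max R₀ 1 with hRdef
  have hR1 : (1:ℝ) ≤ R := le_max_right _ _
  have hR0le : R₀ ≤ R := le_max_left _ _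
  -- constants
  have hWpos : 0 < Real.exp (|β| * R) * (1 + R) ^ α :=
    mul_pos (Real.exp_pos _) (Real.rpow_pos_of_pos (by linarith) _)
  set W : ℝ := Real.exp (|β| * R) * (1 + R) ^ α with hWdef
  set E : ℝ := Real.exp (|β| * (R + 1)) with hEdef
  have hEpos : 0 < E := Real.exp_pos _
  set K : ℝ := W * (4 * M * E) with hKdef
  have hKpos : 0 < K := mul_pos hWpos (by positivity)
  set δ : ℝ := min 1 (ε / (4 * (K + 1))) with hδdef
  have hδpos : 0 < δ := lt_min one_pos (by positivity)
  have hδ1 : δ ≤ 1 := min_le_left _ _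
  set ε'' : ℝ := ε / (4 * (W + 1)) with hε''def
  have hε''pos : 0 < ε'' := by positivity
  have hδright : δ ≤ ε / (4 * (K + 1)) := min_le_right _ _
  clear_value R W E K δ ε''
  -- finite net of the truncated region
  have htb : TotallyBounded (GammaC L ∩ Metric.closedBall (0:ℂ) R) :=
    (isCompact_closedBall (0:ℂ) R).totallyBounded.subset inter_subset_right
  obtain ⟨t, htsub, htfin, htcover⟩ :=
    (totallyBounded_iff_subset.mp htb) _ (Metric.dist_mem_uniformity (half_pos hδpos))
  -- pick indices of approximating points from the dense sequence
  have hpickex : ∀ y ∈ t, ∃ n, dist y (u n) < δ / 2 := by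
    intro y hy
    exact hDdense y (htsub hy).1 _ (half_pos hδpos)
  set pick : ℂ → ℕ := fun y => if h : ∃ n, dist y (u n) < δ / 2 then h.choose else 0
    with hpickdef
  have hpickd : ∀ y ∈ t, dist y (u (pick y)) < δ / 2 := by
    intro y hy
    have h := hpickex y hy
    simp only [hpickdef, dif_pos h]
    exact h.choose_spec
  -- Cauchy thresholds at the net points
  have hNex : ∀ i : ℕ, ∃ N, ∀ p ≥ N, ∀ q ≥ N,
      dist (A (f (φ p)) (u i)) (A (f (φ q)) (u i)) < ε'' :=
    fun i => Metric.cauchySeq_iff.mp (hcauchy i) ε'' hε''pos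
  set Ncau : ℕ → ℕ := fun i => (hNex i).choose with hNcaudef
  have hNspec : ∀ i, ∀ p ≥ Ncau i, ∀ q ≥ Ncau i,
      dist (A (f (φ p)) (u i)) (A (f (φ q)) (u i)) < ε'' :=
    fun i => (hNex i).choose_spec
  refine ⟨(htfin.toFinset.image pick).sup Ncau, ?_⟩
  intro m hm n hn
  -- the key pointwise bound
  have key : ∀ x ∈ GammaC L,
      cweight α β x * ‖A (f (φ m)) x - A (f (φ n)) x‖ ≤ 3 * ε / 4 := by
    intro x hx
    by_cases hcase : R ≤ 1 + ‖x‖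
    · -- tail region: use decay improvement
      have hxpos : (0:ℝ) < 1 + ‖x‖ := by positivity
      have hsplit : cweight α β x
          = (1 + ‖x‖) ^ (-(α' - α)) * cweight α' β x := by
        have h1 : (1 + ‖x‖) ^ (-(α' - α)) * (1 + ‖x‖) ^ α'
            = (1 + ‖x‖) ^ α := by
          rw [← Real.rpow_add hxpos]
          congr 1
          ring
        unfold cweight
        rw [← h1]
        ring
      have hrp : (0:ℝ) ≤ (1 + ‖x‖) ^ (-(α' - α)) :=
        (Real.rpow_pos_of_pos hxpos _).le
      have habs : ‖A (f (φ m)) x - A (f (φ n)) x‖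
          ≤ ‖A (f (φ m)) x‖ + ‖A (f (φ n)) x‖ := by
        have h := norm_add_le (A (f (φ m)) x) (-(A (f (φ n)) x))
        simpa [sub_eq_add_neg, map_neg] using h
      have hRb := hR₀ (1 + ‖x‖) (le_trans hR0le hcase)
      have hcw' : (0:ℝ) ≤ cweight α' β x := (cweight_pos _ _ _).le
      calc cweight α β x * ‖A (f (φ m)) x - A (f (φ n)) x‖
          = (1 + ‖x‖) ^ (-(α' - α)) *
            (cweight α' β x * ‖A (f (φ m)) x - A (f (φ n)) x‖) := by
            rw [hsplit]; ring
        _ ≤ (1 + ‖x‖) ^ (-(α' - α)) *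
            (cweight α' β x * (‖A (f (φ m)) x‖ + ‖A (f (φ n)) x‖)) := by
            apply mul_le_mul_of_nonneg_left _ hrp
            exact mul_le_mul_of_nonneg_left habs hcw'
        _ = (1 + ‖x‖) ^ (-(α' - α)) *
            (cweight α' β x * ‖A (f (φ m)) x‖
              + cweight α' β x * ‖A (f (φ n)) x‖) := by ring
        _ ≤ (1 + ‖x‖) ^ (-(α' - α)) * (M + M) := by
            apply mul_le_mul_of_nonneg_left _ hrp
            exact add_le_add (hptbd _ x hx) (hptbd _ x hx)
        _ ≤ (ε / (4 * M)) * (M + M) :=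
            mul_le_mul_of_nonneg_right hRb.le (by positivity)
        _ = ε / 2 := by field_simp; ring
        _ ≤ 3 * ε / 4 := by linarith
    · -- near region: equicontinuity + Cauchyness at net points
      push_neg at hcase
      have hxR : ‖x‖ ≤ R := by linarith
      have hxmem : x ∈ GammaC L ∩ Metric.closedBall (0:ℂ) R := by
        refine ⟨hx, ?_⟩
        simpa [Metric.mem_closedBall, Complex.dist_eq] using hxR
      obtain ⟨y, hyt, hxy⟩ : ∃ y ∈ t, dist x y < δ / 2 := by
        have := htcover hxmem
        simpa using this
      set d : ℂ := u (pick y) with hd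
      have hdmem : d ∈ GammaC L := hum _
      have hxd : dist x d < δ := by
        have h1 := hpickd y hyt
        have h2 := dist_triangle x y d
        linarith
      have hdR : ‖d‖ ≤ R + 1 := by
        have h1 : dist d 0 ≤ dist d x + dist x 0 := dist_triangle _ _ _
        have h2 : dist d 0 = ‖d‖ := by simp [Complex.dist_eq]
        have h3 : dist x 0 = ‖x‖ := by simp [Complex.dist_eq]
        have h4 : dist d x = dist x d := dist_comm _ _
        rw [h2, h3, h4] at h1
        linarith
      -- weight bound on the truncated region
      have hwb : cweight α β x ≤ W := by
        rw [hWdef]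
        unfold cweight
        apply mul_le_mul
        · apply Real.exp_le_exp.mpr
          have h1 : |x.im| ≤ R := le_trans (Complex.abs_im_le_norm x) hxR
          have h2 : β * |x.im| ≤ |β| * |x.im| :=
            mul_le_mul_of_nonneg_right (le_abs_self β) (abs_nonneg _)
          have h3 : |β| * |x.im| ≤ |β| * R :=
            mul_le_mul_of_nonneg_left h1 (abs_nonneg β)
          linarith
        · exact Real.rpow_le_rpow (by positivity) (by linarith) hα.le
        · exact (Real.rpow_pos_of_pos (by positivity) _).le
        · exact (Real.exp_pos _).le
      -- Lipschitz bound for both functions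
      have hlipb : ∀ k, ‖A (f k) x - A (f k) d‖ ≤ 2 * M * E * δ := by
        intro k
        have h1 := hlip (f k) (hf k).1 x hx d hdmem
        have hSb : Real.exp (-β * |x.im|) + Real.exp (-β * |d.im|) ≤ 2 * E := by
          have himx : |x.im| ≤ R + 1 := le_trans (Complex.abs_im_le_norm x) (by linarith)
          have himd : |d.im| ≤ R + 1 := le_trans (Complex.abs_im_le_norm d) hdR
          have e1 : Real.exp (-β * |x.im|) ≤ E := by
            rw [hEdef]
            apply Real.exp_le_exp.mpr
            have a1 : -β * |x.im| ≤ |β| * |x.im| :=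
              mul_le_mul_of_nonneg_right (neg_le_abs β) (abs_nonneg _)
            have a2 : |β| * |x.im| ≤ |β| * (R + 1) :=
              mul_le_mul_of_nonneg_left himx (abs_nonneg β)
            linarith
          have e2 : Real.exp (-β * |d.im|) ≤ E := by
            rw [hEdef]
            apply Real.exp_le_exp.mpr
            have a1 : -β * |d.im| ≤ |β| * |d.im| :=
              mul_le_mul_of_nonneg_right (neg_le_abs β) (abs_nonneg _)
            have a2 : |β| * |d.im| ≤ |β| * (R + 1) :=
              mul_le_mul_of_nonneg_left himd (abs_nonneg β)
            linarith
          linarith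
        have hSpos : (0:ℝ) ≤ Real.exp (-β * |x.im|) + Real.exp (-β * |d.im|) := by positivity
        have hTb : ‖x - d‖ ≤ δ := by
          rw [← Complex.dist_eq]
          exact hxd.le
        have hTpos : (0:ℝ) ≤ ‖x - d‖ := norm_nonneg _
        have h2 : M * cnorm L α β (f k) ≤ M := by
          calc M * cnorm L α β (f k) ≤ M * 1 :=
                mul_le_mul_of_nonneg_left (hf k).2 hM.le
            _ = M := mul_one M
        calc ‖A (f k) x - A (f k) d‖
            ≤ M * cnorm L α β (f k) *
              (Real.exp (-β * |x.im|) + Real.exp (-β * |d.im|)) * ‖x - d‖ := h1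
          _ ≤ M * (Real.exp (-β * |x.im|) + Real.exp (-β * |d.im|)) * ‖x - d‖ :=
              mul_le_mul_of_nonneg_right (mul_le_mul_of_nonneg_right h2 hSpos) hTpos
          _ ≤ M * (2 * E) * ‖x - d‖ :=
              mul_le_mul_of_nonneg_right (mul_le_mul_of_nonneg_left hSb hM.le) hTpos
          _ ≤ M * (2 * E) * δ :=
              mul_le_mul_of_nonneg_left hTb (by positivity)
          _ = 2 * M * E * δ := by ring
      -- Cauchy bound at the net point
      have hyI : pick y ∈ htfin.toFinset.image pick :=
        Finset.mem_image_of_mem pick (htfin.mem_toFinset.mpr hyt)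
      have hNle : Ncau (pick y) ≤ (htfin.toFinset.image pick).sup Ncau :=
        Finset.le_sup hyI
      have hcaub := hNspec (pick y) m (le_trans hNle hm) n (le_trans hNle hn)
      rw [Complex.dist_eq] at hcaub
      -- triangle inequality
      have htri : ‖A (f (φ m)) x - A (f (φ n)) x‖
          ≤ ‖A (f (φ m)) x - A (f (φ m)) d‖
            + ‖A (f (φ n)) x - A (f (φ n)) d‖
            + ‖A (f (φ m)) d - A (f (φ n)) d‖ := by
        have heq : A (f (φ m)) x - A (f (φ n)) x
            = (A (f (φ m)) x - A (f (φ m)) d)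
              + ((A (f (φ m)) d - A (f (φ n)) d) + (A (f (φ n)) d - A (f (φ n)) x)) := by
          ring
        rw [heq]
        refine le_trans (norm_add_le _ _) ?_
        have h2 := norm_add_le (A (f (φ m)) d - A (f (φ n)) d)
          (A (f (φ n)) d - A (f (φ n)) x)
        have h3 : ‖A (f (φ n)) d - A (f (φ n)) x‖
            = ‖A (f (φ n)) x - A (f (φ n)) d‖ :=
          norm_sub_rev _ _
        rw [h3] at h2
        linarith
      -- assemble
      have hKδ : K * δ ≤ ε / 4 := by
        have h1 : K * δ ≤ K * (ε / (4 * (K + 1))) :=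
          mul_le_mul_of_nonneg_left hδright hKpos.le
        have h2 : K * (ε / (4 * (K + 1))) ≤ ε / 4 := aux_div K ε hKpos.le hε.le
        linarith
      have hWε : W * ε'' ≤ ε / 4 := by
        rw [hε''def]
        exact aux_div W ε hWpos.le hε.le
      calc cweight α β x * ‖A (f (φ m)) x - A (f (φ n)) x‖
          ≤ W * ‖A (f (φ m)) x - A (f (φ n)) x‖ :=
            mul_le_mul_of_nonneg_right hwb (norm_nonneg _)
        _ ≤ W * ((2 * M * E * δ) + (2 * M * E * δ) + ε'') := by
            apply mul_le_mul_of_nonneg_left _ hWpos.le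
            have := add_le_add (add_le_add (hlipb (φ m)) (hlipb (φ n))) hcaub.le
            linarith [htri]
        _ = K * δ + W * ε'' := by rw [hKdef]; ring
        _ ≤ ε / 4 + ε / 4 := add_le_add hKδ hWε
        _ ≤ 3 * ε / 4 := by linarith
  calc cnorm L α β (fun x => A (f (φ m)) x - A (f (φ n)) x)
      ≤ 3 * ε / 4 := cnorm_le_of_forall (by positivity) key
    _ < ε := by linarith

end
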